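/- Given real numbers s1, s2, b1, b2 and a1 < a2, with s = (b2 - b1)/(a2 - a1) and M = max(|s1 - s|, |s2 - s|), there exists a cubic polynomial f with f(ai) = bi and f'(ai) = si for i = 1, 2, such that |(f(x2) - f(x1))/(x2 - x1) - s| ≤ 3M whenever a1 ≤ x1 < x2 ≤ a2. -/

import Mathlib

/-!
Take the cubic Hermite interpolant `f`. Writing `t = (x - a1) / (a2 - a1)` and `s` for the secant
slope, `f' x - s = (s1 - s) (3t² - 4t + 1) + (s2 - s) (3t² - 2t)`, and both Hermite factors have
absolute value at most `1` on `[0, 1]`, so `|f' - s| ≤ 2M` on `[a1, a2]`. By the mean value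
theorem every difference quotient of `f` on `[a1, a2]` is a value of `f'` there.
-/

open Polynomial Set

noncomputable def hermiteCubic (a1 a2 b1 b2 s1 s2 : ℝ) : ℝ[X] :=
  C b1 + C s1 * (X - C a1)
    + C ((3 * ((b2 - b1) / (a2 - a1)) - 2 * s1 - s2) / (a2 - a1)) * (X - C a1) ^ 2
    + C ((s1 + s2 - 2 * ((b2 - b1) / (a2 - a1))) / (a2 - a1) ^ 2) * (X - C a1) ^ 3

namespace hermiteCubic

variable (a1 a2 b1 b2 s1 s2 : ℝ)

theorem degree_le : (hermiteCubic a1 a2 b1 b2 s1 s2).degree ≤ 3 := by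
  unfold hermiteCubic; compute_degree

theorem eval_eq (x : ℝ) : (hermiteCubic a1 a2 b1 b2 s1 s2).eval x =
    b1 + s1 * (x - a1) + (3 * ((b2 - b1) / (a2 - a1)) - 2 * s1 - s2) / (a2 - a1) * (x - a1) ^ 2
      + (s1 + s2 - 2 * ((b2 - b1) / (a2 - a1))) / (a2 - a1) ^ 2 * (x - a1) ^ 3 := by
  simp [hermiteCubic]

theorem derivative_eval_eq (x : ℝ) : (hermiteCubic a1 a2 b1 b2 s1 s2).derivative.eval x =
    s1 + 2 * ((3 * ((b2 - b1) / (a2 - a1)) - 2 * s1 - s2) / (a2 - a1)) * (x - a1)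
      + 3 * ((s1 + s2 - 2 * ((b2 - b1) / (a2 - a1))) / (a2 - a1) ^ 2) * (x - a1) ^ 2 := by
  simp only [hermiteCubic, derivative_add, derivative_mul, derivative_pow, derivative_sub,
    derivative_C, derivative_X, eval_add, eval_mul, eval_pow, eval_sub, eval_C, eval_X,
    eval_zero, eval_one]
  push_cast
  ring

theorem eval_left : (hermiteCubic a1 a2 b1 b2 s1 s2).eval a1 = b1 := by
  simp [eval_eq]

variable {a1 a2}

theorem eval_right (h : a1 ≠ a2) : (hermiteCubic a1 a2 b1 b2 s1 s2).eval a2 = b2 := by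
  have : a2 - a1 ≠ 0 := sub_ne_zero.mpr h.symm
  rw [eval_eq]; field_simp; ring

theorem derivative_eval_left : (hermiteCubic a1 a2 b1 b2 s1 s2).derivative.eval a1 = s1 := by
  simp [derivative_eval_eq]

theorem derivative_eval_right (h : a1 ≠ a2) :
    (hermiteCubic a1 a2 b1 b2 s1 s2).derivative.eval a2 = s2 := by
  have : a2 - a1 ≠ 0 := sub_ne_zero.mpr h.symm
  rw [derivative_eval_eq]; field_simp; ring

theorem derivative_eval_sub_slope (h : a1 ≠ a2) (x : ℝ) :
    (hermiteCubic a1 a2 b1 b2 s1 s2).derivative.eval x - (b2 - b1) / (a2 - a1) =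
      (s1 - (b2 - b1) / (a2 - a1))
          * (3 * ((x - a1) / (a2 - a1)) ^ 2 - 4 * ((x - a1) / (a2 - a1)) + 1)
        + (s2 - (b2 - b1) / (a2 - a1))
          * (3 * ((x - a1) / (a2 - a1)) ^ 2 - 2 * ((x - a1) / (a2 - a1))) := by
  have : a2 - a1 ≠ 0 := sub_ne_zero.mpr h.symm
  rw [derivative_eval_eq]; field_simp; ring

end hermiteCubic

theorem abs_hermite_combination_le {t : ℝ} (ht : t ∈ Icc (0 : ℝ) 1) (A B : ℝ) :
    |A * (3 * t ^ 2 - 4 * t + 1) + B * (3 * t ^ 2 - 2 * t)| ≤ 2 * max |A| |B| := by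
  obtain ⟨ht0, ht1⟩ := ht
  have hp : |3 * t ^ 2 - 4 * t + 1| ≤ 1 := abs_le.mpr ⟨by nlinarith, by nlinarith⟩
  have hq : |3 * t ^ 2 - 2 * t| ≤ 1 := abs_le.mpr ⟨by nlinarith, by nlinarith⟩
  calc |A * (3 * t ^ 2 - 4 * t + 1) + B * (3 * t ^ 2 - 2 * t)|
      ≤ |A| * |3 * t ^ 2 - 4 * t + 1| + |B| * |3 * t ^ 2 - 2 * t| := by
        rw [← abs_mul, ← abs_mul]; exact abs_add_le _ _
    _ ≤ max |A| |B| * 1 + max |A| |B| * 1 := by gcongr <;> simp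
    _ = 2 * max |A| |B| := by ring

theorem abs_slope_sub_le_of_abs_deriv_sub_le {f f' : ℝ → ℝ} {a b s K : ℝ}
    (hf : ∀ x ∈ Icc a b, HasDerivAt f (f' x) x) (hK : ∀ x ∈ Icc a b, |f' x - s| ≤ K)
    {x1 x2 : ℝ} (ha : a ≤ x1) (hx : x1 < x2) (hb : x2 ≤ b) :
    |(f x2 - f x1) / (x2 - x1) - s| ≤ K := by
  have hsub : Icc x1 x2 ⊆ Icc a b := Icc_subset_Icc ha hb
  obtain ⟨z, hz, hslope⟩ := exists_hasDerivAt_eq_slope f f' hx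
    (fun y hy => (hf y (hsub hy)).continuousAt.continuousWithinAt)
    (fun y hy => hf y (hsub (Ioo_subset_Icc_self hy)))
  rw [← hslope]
  exact hK z (hsub (Ioo_subset_Icc_self hz))

theorem stmt_1 (s1 s2 b1 b2 a1 a2 : ℝ) (hlt : a1 < a2) :
    ∃ f : Polynomial ℝ, f.degree ≤ 3 ∧
      f.eval a1 = b1 ∧ f.eval a2 = b2 ∧
      f.derivative.eval a1 = s1 ∧ f.derivative.eval a2 = s2 ∧
      ∀ x1 x2 : ℝ, a1 ≤ x1 → x1 < x2 → x2 ≤ a2 →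
        |(f.eval x2 - f.eval x1) / (x2 - x1) - (b2 - b1) / (a2 - a1)| ≤
          3 * max |s1 - (b2 - b1) / (a2 - a1)| |s2 - (b2 - b1) / (a2 - a1)| := by
  set f := hermiteCubic a1 a2 b1 b2 s1 s2
  refine ⟨f, hermiteCubic.degree_le .., hermiteCubic.eval_left ..,
    hermiteCubic.eval_right _ _ _ _ hlt.ne, hermiteCubic.derivative_eval_left ..,
    hermiteCubic.derivative_eval_right _ _ _ _ hlt.ne, fun x1 x2 ha hx hb =>
      abs_slope_sub_le_of_abs_deriv_sub_le (fun x _ => f.hasDerivAt x) ?_ ha hx hb⟩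
  intro x hx
  have ht : (x - a1) / (a2 - a1) ∈ Icc (0 : ℝ) 1 := by
    have : 0 < a2 - a1 := sub_pos.mpr hlt
    exact ⟨div_nonneg (by linarith [hx.1]) this.le, (div_le_one this).mpr (by linarith [hx.2])⟩
  rw [hermiteCubic.derivative_eval_sub_slope _ _ _ _ hlt.ne]
  refine (abs_hermite_combination_le ht _ _).trans ?_
  linarith [(abs_nonneg (s1 - (b2 - b1) / (a2 - a1))).trans
    (le_max_left _ |s2 - (b2 - b1) / (a2 - a1)|)]
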